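/- Fix N ≥ 1 and let G_N(t, y) = (4πt)^{−N/2} e^{−|y|²/(4t)} for t > 0, y ∈ ℝ^N. Let Γ be a directed graph without self-loops with n vertices and m edges (head and tail maps h, t), let α_e (e ∈ Γ₁) be multi-indices in ℕ^N, and let Φ be a smooth compactly supported function on (ℝ^N)^n. Then the function F : (0,∞)^m → ℝ defined by F((t_e)) = ∫_{(ℝ^N)^n} Π_{e∈Γ₁} (∂_y^{α_e} G_N)(t_e, y^{h(e)} − y^{t(e)}) · Φ(y^1, …, y^n) dy is a smooth function of the Schwinger parameters (t_e) on (0,∞)^m. -/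

import Mathlib

open Matrix MeasureTheory
open scoped BigOperators Classical

/-- A directed graph with `n + 1` vertices (indexed by `Fin (n + 1)`) and `m` edges
(indexed by `Fin m`), given by head and tail maps and having no self-loops. -/
structure DGraph (n m : ℕ) where
  head : Fin m → Fin (n + 1)
  tail : Fin m → Fin (n + 1)
  no_self_loop : ∀ e, head e ≠ tail e

namespace DGraph

variable {n m : ℕ}

/-- The incidence matrix: `ρ e i = 1` if `head e = i`, `-1` if `tail e = i`, `0` otherwise. -/
def inc (G : DGraph n m) : Matrix (Fin m) (Fin (n + 1)) ℝ := fun e i =>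
  if G.head e = i then 1 else if G.tail e = i then -1 else 0

/-- The underlying undirected (simple) adjacency graph determined by a set of edges. -/
def adjGraph (G : DGraph n m) (S : Set (Fin m)) : SimpleGraph (Fin (n + 1)) :=
  SimpleGraph.fromRel (fun i j => ∃ e ∈ S, G.head e = i ∧ G.tail e = j)

/-- Connectedness of the underlying undirected multigraph. -/
def Conn (G : DGraph n m) : Prop := (G.adjGraph Set.univ).Connected

/-- A spanning tree: a set of `n` edges (one fewer than the number `n + 1` of vertices)
whose edges connect all the vertices. -/
def IsSpanningTree (G : DGraph n m) (T : Finset (Fin m)) : Prop :=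
  T.card = n ∧ (G.adjGraph (T : Set (Fin m))).Connected

/-- The weighted Laplacian `M_Γ(t)_{ij} = ∑_e ρ^e_i (1/t_e) ρ^e_j` over the first `n`
vertices (the last vertex deleted). -/
noncomputable def lap (G : DGraph n m) (t : Fin m → ℝ) : Matrix (Fin n) (Fin n) ℝ :=
  fun i j => ∑ e, G.inc e i.castSucc * (1 / t e) * G.inc e j.castSucc

/-- The reduced incidence matrix: delete the column of the last vertex. -/
def redInc (G : DGraph n m) : Matrix (Fin m) (Fin n) ℝ := fun e i => G.inc e i.castSucc

end DGraph

/-- The heat kernel `G_N(t, y) = (4πt)^{-N/2} e^{-|y|²/(4t)}` on `ℝ^N`. -/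
noncomputable def gaussKernel (N : ℕ) (t : ℝ) (y : Fin N → ℝ) : ℝ :=
  (4 * Real.pi * t) ^ (-(N : ℝ) / 2) * Real.exp (-(∑ k, (y k) ^ 2) / (4 * t))

/-- The partial derivative in the `k`-th coordinate. -/
noncomputable def pderiv' {N : ℕ} (k : Fin N) (f : (Fin N → ℝ) → ℝ) :
    (Fin N → ℝ) → ℝ :=
  fun y => deriv (fun s => f (Function.update y k s)) (y k)

/-- The multi-index partial derivative `∂_y^α`. -/
noncomputable def mderiv {N : ℕ} (α : Fin N → ℕ) (f : (Fin N → ℝ) → ℝ) :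
    (Fin N → ℝ) → ℝ :=
  (List.finRange N).foldr (fun k g => (pderiv' k)^[α k] g) f

/-!
Every `∂_y^α G_N(t, y)` is jointly smooth in `(t, y)` on `(0, ∞) × ℝ^N`, since `G_N` is and
partial derivatives in `y` of a jointly smooth function are again jointly smooth. Hence the
integrand is jointly smooth in the Schwinger parameters and `y`, and it vanishes for `y` outside
the compact support of `Φ` uniformly in the parameters; a parametric integral of this kind is a
convolution with the constant `1`, and so smooth in the parameters.
-/

open Set Function
open scoped ContDiff Convolution

theorem contDiffOn_integral_of_eq_zero_outside_isCompact {𝕜 G E P : Type*} [RCLike 𝕜]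
    [NormedAddCommGroup E] [NormedSpace ℝ E] [NormedSpace 𝕜 E]
    [NormedAddCommGroup G] [NormedSpace 𝕜 G] [MeasurableSpace G] [BorelSpace G]
    [NormedAddCommGroup P] [NormedSpace 𝕜 P]
    {μ : Measure G} [IsLocallyFiniteMeasure μ] [μ.IsNegInvariant]
    {n : ℕ∞} {g : P → G → E} {s : Set P} {k : Set G} (hs : IsOpen s) (hk : IsCompact k)
    (hgk : ∀ p ∈ s, ∀ x ∉ k, g p x = 0) (hg : ContDiffOn 𝕜 n ↿g (s ×ˢ univ)) :
    ContDiffOn 𝕜 n (fun p => ∫ x, g p x ∂μ) s := by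
  -- `∫ g p = (1 ⋆ g p) 0` by neg-invariance of `μ`
  have hconv := contDiffOn_convolution_right_with_param_comp (μ := μ)
    (ContinuousLinearMap.lsmul 𝕜 𝕜) contDiffOn_const hs hk (fun p x hp hx => hgk p hp x hx)
    (locallyIntegrable_const (1 : 𝕜)) hg (v := fun _ => (0 : G))
  refine hconv.congr fun p _ => ?_
  simp only [convolution_def, ContinuousLinearMap.lsmul_apply, one_smul, zero_sub]
  exact (integral_neg_eq_self (g p) μ).symm

section ParametricPartialDerivatives

variable {P : Type*} [NormedAddCommGroup P] [NormedSpace ℝ P] {N : ℕ}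

theorem pderiv'_eq_fderiv_uncurry {F : P → (Fin N → ℝ) → ℝ} {p : P} {y : Fin N → ℝ}
    (hF : DifferentiableAt ℝ (uncurry F) (p, y)) (k : Fin N) :
    pderiv' k (F p) y = fderiv ℝ (uncurry F) (p, y) (0, Pi.single k 1) := by
  have hline : HasDerivAt (fun t : ℝ => (p, update y k t)) ((0 : P), Pi.single k 1) (y k) :=
    (hasDerivAt_const (y k) p).prodMk (hasDerivAt_update y k (y k))
  rw [← update_eq_self k y] at hF
  have := hF.hasFDerivAt.comp_hasDerivAt (y k) hline
  rw [update_eq_self] at this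
  exact this.deriv

theorem contDiffOn_uncurry_pderiv' {F : P → (Fin N → ℝ) → ℝ} {s : Set P} (hs : IsOpen s)
    (hF : ContDiffOn ℝ ∞ (uncurry F) (s ×ˢ univ)) (k : Fin N) :
    ContDiffOn ℝ ∞ (uncurry fun p => pderiv' k (F p)) (s ×ˢ univ) := by
  have hso : IsOpen (s ×ˢ (univ : Set (Fin N → ℝ))) := hs.prod isOpen_univ
  have hDF : ContDiffOn ℝ ∞ (fun q => fderiv ℝ (uncurry F) q (0, Pi.single k 1)) (s ×ˢ univ) :=
    (hF.fderiv_of_isOpen hso (by simp)).clm_apply contDiffOn_const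
  refine hDF.congr fun q hq => pderiv'_eq_fderiv_uncurry ?_ k
  exact (hF.contDiffAt (hso.mem_nhds hq)).differentiableAt (by simp)

theorem contDiffOn_uncurry_iterate_pderiv' {F : P → (Fin N → ℝ) → ℝ} {s : Set P}
    (hs : IsOpen s) (hF : ContDiffOn ℝ ∞ (uncurry F) (s ×ˢ univ)) (k : Fin N) (j : ℕ) :
    ContDiffOn ℝ ∞ (uncurry fun p => (pderiv' k)^[j] (F p)) (s ×ˢ univ) := by
  induction j with
  | zero => exact hF
  | succ j ih =>
    simpa only [iterate_succ_apply'] using contDiffOn_uncurry_pderiv' hs ih k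

theorem contDiffOn_uncurry_mderiv {F : P → (Fin N → ℝ) → ℝ} {s : Set P} (hs : IsOpen s)
    (hF : ContDiffOn ℝ ∞ (uncurry F) (s ×ˢ univ)) (α : Fin N → ℕ) :
    ContDiffOn ℝ ∞ (uncurry fun p => mderiv α (F p)) (s ×ˢ univ) := by
  suffices ∀ l : List (Fin N), ContDiffOn ℝ ∞
      (uncurry fun p => l.foldr (fun k g => (pderiv' k)^[α k] g) (F p)) (s ×ˢ univ) from
    this (List.finRange N)
  intro l
  induction l with
  | nil => exact hF
  | cons k l ih => exact contDiffOn_uncurry_iterate_pderiv' hs ih k (α k)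

end ParametricPartialDerivatives

theorem contDiffOn_uncurry_gaussKernel (N : ℕ) :
    ContDiffOn ℝ ∞ (uncurry (gaussKernel N)) (Ioi 0 ×ˢ univ) := by
  rintro ⟨t, y⟩ ⟨ht, -⟩
  have ht : 0 < t := ht
  refine ContDiffAt.contDiffWithinAt ?_
  unfold gaussKernel uncurry
  have h1 : 4 * Real.pi * t ≠ 0 := by positivity
  have h2 : 4 * t ≠ 0 := by positivity
  fun_prop (disch := assumption)

theorem feynman_integrand_smooth_in_schwinger_parameters_general {n m : ℕ} (N : ℕ)
    (G : DGraph n m) (α : Fin m → Fin N → ℕ)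
    (Φ : (Fin (n + 1) → Fin N → ℝ) → ℝ) (hΦ : ContDiff ℝ (⊤ : ℕ∞) Φ)
    (hsupp : HasCompactSupport Φ) :
    ContDiffOn ℝ (⊤ : ℕ∞)
      (fun T : Fin m → ℝ =>
        ∫ y : Fin (n + 1) → Fin N → ℝ,
          (∏ e, mderiv (α e) (fun w => gaussKernel N (T e) w)
              (y (G.head e) - y (G.tail e))) * Φ y)
      {T : Fin m → ℝ | ∀ e, 0 < T e} := by
  have hpos : IsOpen {T : Fin m → ℝ | ∀ e, 0 < T e} := by
    simp only [Set.ofPred_forall]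
    exact isOpen_iInter_of_finite fun e => isOpen_lt continuous_const (continuous_apply e)
  have hedge (e : Fin m) : ContDiff ℝ ∞
      fun q : (Fin m → ℝ) × (Fin (n + 1) → Fin N → ℝ) =>
        (q.1 e, q.2 (G.head e) - q.2 (G.tail e)) := by
    fun_prop
  refine contDiffOn_integral_of_eq_zero_outside_isCompact hpos hsupp
    (fun T _ y hy => by simp [image_eq_zero_of_notMem_tsupport hy]) ?_
  refine ContDiffOn.mul (contDiffOn_prod fun e _ => ?_) (hΦ.comp contDiff_snd).contDiffOn
  refine (contDiffOn_uncurry_mderiv isOpen_Ioi (contDiffOn_uncurry_gaussKernel N) (α e)).comp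
    (hedge e).contDiffOn ?_
  rintro ⟨T, y⟩ ⟨hT, -⟩
  exact ⟨hT e, mem_univ _⟩

/-- For a directed graph `Γ` without self-loops, multi-indices `α_e`, and a smooth
compactly supported `Φ`, the spacetime integral
`F((t_e)) = ∫ ∏_e (∂_y^{α_e} G_N)(t_e, y^{h(e)} - y^{t(e)}) Φ(y) dy`
is a smooth function of the Schwinger parameters on `(0, ∞)^{Γ₁}`. -/
theorem feynman_integrand_smooth_in_schwinger_parameters {n m : ℕ} (N : ℕ) (hN : 1 ≤ N)
    (G : DGraph n m) (α : Fin m → Fin N → ℕ)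
    (Φ : (Fin (n + 1) → Fin N → ℝ) → ℝ) (hΦ : ContDiff ℝ (⊤ : ℕ∞) Φ)
    (hsupp : HasCompactSupport Φ) :
    ContDiffOn ℝ (⊤ : ℕ∞)
      (fun T : Fin m → ℝ =>
        ∫ y : Fin (n + 1) → Fin N → ℝ,
          (∏ e, mderiv (α e) (fun w => gaussKernel N (T e) w)
              (y (G.head e) - y (G.tail e))) * Φ y)
      {T : Fin m → ℝ | ∀ e, 0 < T e} :=
  feynman_integrand_smooth_in_schwinger_parameters_general N G α Φ hΦ hsupp
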